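/- Let N ≥ 1, 1 < p < ∞, γ > N, and let G ⊆ ℝ^N be open. Let u : ℝ^N → ℝ be measurable with u = 0 almost everywhere on G and ∫_{ℝ^N} |u(y)|^{p−1} (1+|y|)^{−γ} dy < ∞. Then for every φ ∈ C_c^∞(ℝ^N) whose support is a compact subset of G, the double integral ∬_{ℝ^N×ℝ^N} |u(x)−u(y)|^{p−2}(u(x)−u(y))(φ(x)−φ(y)) |x−y|^{−γ} dx dy is absolutely convergent and equals −2 ∫_G φ(x) ( ∫_{ℝ^N∖G} |u(y)|^{p−2} u(y) |x−y|^{−γ} dy ) dx. -/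

import Mathlib

open MeasureTheory Real

private lemma abs_rpow_mul_abs {p : ℝ} (hp : 1 < p) (a : ℝ) :
    |a| ^ (p - 2) * |a| = |a| ^ (p - 1) := by
  rcases eq_or_ne a 0 with h | h
  · simp [h, Real.zero_rpow (by linarith : p - 1 ≠ 0)]
  · have ha : (0:ℝ) < |a| := abs_pos.2 h
    calc |a| ^ (p - 2) * |a| = |a| ^ (p - 2) * |a| ^ (1:ℝ) := by rw [Real.rpow_one]
      _ = |a| ^ (p - 2 + 1) := (Real.rpow_add ha _ _).symm
      _ = |a| ^ (p - 1) := by ring_nf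

private lemma geom_bound {δ R t s : ℝ} (hδ : 0 < δ) (hR : 0 ≤ R)
    (h1 : δ ≤ s) (h2 : t - R ≤ s) (_ht : 0 ≤ t) :
    δ / (1 + R + δ) * (1 + t) ≤ s := by
  set c := δ / (1 + R + δ) with hc
  have hpos : 0 < 1 + R + δ := by linarith
  have hc0 : 0 < c := div_pos hδ hpos
  have hcδ : c * (1 + R + δ) = δ := div_mul_cancel₀ _ (ne_of_gt hpos)
  have hc1 : c < 1 := (div_lt_one hpos).2 (by linarith)
  rcases le_total t (R + δ) with h | h
  · nlinarith [mul_nonneg hc0.le (sub_nonneg.2 h)]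
  · nlinarith [mul_nonneg (sub_nonneg.2 hc1.le) (sub_nonneg.2 h)]

/-- Let `N ≥ 1`, `1 < p < ∞`, `γ > N`, `G ⊆ ℝ^N` open. Let `u` be
measurable with `u = 0` a.e. on `G` and `∫ |u(y)|^{p-1}(1+|y|)^{-γ} dy < ∞`. Then for
every `φ ∈ C_c^∞(ℝ^N)` with compact support contained in `G`, the double integral
`∬ |u(x)-u(y)|^{p-2}(u(x)-u(y))(φ(x)-φ(y)) |x-y|^{-γ} dx dy` is absolutely convergent
and equals `-2 ∫_G φ(x) (∫_{ℝ^N∖G} |u(y)|^{p-2}u(y) |x-y|^{-γ} dy) dx`. -/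
theorem stmt_1 (N : ℕ) (hN : 1 ≤ N) (p γ : ℝ) (hp : 1 < p) (hγ : (N : ℝ) < γ)
    (G : Set (EuclideanSpace ℝ (Fin N))) (hG : IsOpen G)
    (u : EuclideanSpace ℝ (Fin N) → ℝ) (hu : Measurable u)
    (hu0 : ∀ᵐ y : EuclideanSpace ℝ (Fin N), y ∈ G → u y = 0)
    (htail : ∫⁻ y : EuclideanSpace ℝ (Fin N),
      ENNReal.ofReal (|u y| ^ (p - 1) * (1 + ‖y‖) ^ (-γ)) < ⊤)
    (φ : EuclideanSpace ℝ (Fin N) → ℝ) (hφ : ContDiff ℝ (⊤ : ℕ∞) φ)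
    (hφc : HasCompactSupport φ) (hφG : tsupport φ ⊆ G) :
    Integrable (fun w : EuclideanSpace ℝ (Fin N) × EuclideanSpace ℝ (Fin N) =>
      |u w.1 - u w.2| ^ (p - 2) * (u w.1 - u w.2) * (φ w.1 - φ w.2) / ‖w.1 - w.2‖ ^ γ) ∧
    (∫ w : EuclideanSpace ℝ (Fin N) × EuclideanSpace ℝ (Fin N),
        |u w.1 - u w.2| ^ (p - 2) * (u w.1 - u w.2) * (φ w.1 - φ w.2) / ‖w.1 - w.2‖ ^ γ)
      = -2 * ∫ x in G, φ x * ∫ y in Gᶜ, |u y| ^ (p - 2) * u y / ‖x - y‖ ^ γ := by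
  classical
  have hγ0 : (0:ℝ) < γ := lt_of_le_of_lt (Nat.cast_nonneg N) hγ
  have hp1 : (0:ℝ) < p - 1 := by linarith
  have hφcont : Continuous φ := hφ.continuous
  -- geometry: distance from the support of φ to the complement of G
  obtain ⟨δ, hδ0, hδG⟩ :=
    (hφc : IsCompact (tsupport φ)).exists_thickening_subset_open hG hφG
  obtain ⟨R0, hR0⟩ := isBounded_iff_forall_norm_le.1
    (hφc : IsCompact (tsupport φ)).isBounded
  set R : ℝ := max R0 0 with hRdef
  have hR : 0 ≤ R := le_max_right _ _
  set c : ℝ := δ / (1 + R + δ) with hcdef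
  have hc0 : 0 < c := div_pos hδ0 (by linarith)
  have hdist : ∀ x y : EuclideanSpace ℝ (Fin N), φ x ≠ 0 → y ∉ G →
      c * (1 + ‖y‖) ≤ ‖x - y‖ := by
    intro x y hx hy
    have hxK : x ∈ tsupport φ := subset_tsupport φ (by simpa [Function.mem_support] using hx)
    have hxR : ‖x‖ ≤ R := le_trans (hR0 x hxK) (le_max_left _ _)
    have h1 : δ ≤ ‖x - y‖ := by
      by_contra hlt
      push_neg at hlt
      refine hy (hδG (Metric.mem_thickening_iff.2 ⟨x, hxK, ?_⟩))
      rw [dist_eq_norm, norm_sub_rev]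
      exact hlt
    have h2 : ‖y‖ - R ≤ ‖x - y‖ := by
      have h3 := norm_sub_norm_le y x
      rw [norm_sub_rev x y]
      linarith
    exact geom_bound hδ0 hR h1 h2 (norm_nonneg y)
  -- abbreviations
  set A : EuclideanSpace ℝ (Fin N) → ℝ := fun y => |u y| ^ (p - 2) * u y with hA
  set ind : EuclideanSpace ℝ (Fin N) → ℝ := Gᶜ.indicator (fun _ => (1:ℝ)) with hind
  set H1 : EuclideanSpace ℝ (Fin N) × EuclideanSpace ℝ (Fin N) → ℝ :=
    fun w => ind w.2 * (-(A w.2) * φ w.1 / ‖w.1 - w.2‖ ^ γ) with hH1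
  set H2 : EuclideanSpace ℝ (Fin N) × EuclideanSpace ℝ (Fin N) → ℝ :=
    fun w => ind w.1 * (-(A w.1) * φ w.2 / ‖w.1 - w.2‖ ^ γ) with hH2
  -- measurability
  have hGc : MeasurableSet (Gᶜ : Set (EuclideanSpace ℝ (Fin N))) := hG.measurableSet.compl
  have hAm : Measurable A := (hu.abs.pow_const (p - 2)).mul hu
  have hindm : Measurable ind := measurable_const.indicator hGc
  have hH1m : Measurable H1 :=
    (hindm.comp measurable_snd).mul
      ((((hAm.comp measurable_snd).neg).mul (hφcont.measurable.comp measurable_fst)).div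
        ((measurable_fst.sub measurable_snd).norm.pow_const γ))
  -- integrable tail function
  have hψint : Integrable (fun y : EuclideanSpace ℝ (Fin N) =>
      |u y| ^ (p - 1) * (1 + ‖y‖) ^ (-γ)) := by
    refine ⟨((hu.abs.pow_const (p - 1)).mul
      ((measurable_const.add measurable_norm).pow_const (-γ))).aestronglyMeasurable, ?_⟩
    refine (hasFiniteIntegral_iff_ofReal (ae_of_all _ fun y => ?_)).2 htail
    positivity
  have hφint : Integrable (fun x : EuclideanSpace ℝ (Fin N) => (c ^ γ)⁻¹ * |φ x|) :=
    (hφcont.abs.integrable_of_hasCompactSupport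
      (hφc.comp_left (g := fun t : ℝ => |t|) abs_zero)).const_mul _
  have hgint : Integrable (fun w : EuclideanSpace ℝ (Fin N) × EuclideanSpace ℝ (Fin N) =>
      ((c ^ γ)⁻¹ * |φ w.1|) * (|u w.2| ^ (p - 1) * (1 + ‖w.2‖) ^ (-γ)))
      (volume.prod volume) := hφint.mul_prod hψint
  -- pointwise bound
  have hb : ∀ w : EuclideanSpace ℝ (Fin N) × EuclideanSpace ℝ (Fin N),
      ‖H1 w‖ ≤ ((c ^ γ)⁻¹ * |φ w.1|) * (|u w.2| ^ (p - 1) * (1 + ‖w.2‖) ^ (-γ)) := by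
    rintro ⟨x, y⟩
    by_cases hy : y ∈ G
    · have h0 : ind y = 0 := Set.indicator_of_notMem (by simpa using hy) _
      simp only [hH1, h0, zero_mul, norm_zero]
      positivity
    · by_cases hx : φ x = 0
      · simp only [hH1, hH2, hx, mul_zero, zero_div, zero_mul, mul_zero, norm_zero,
          abs_zero, mul_zero, zero_mul]
        simp [hx]
      · have hd := hdist x y hx hy
        have hcy : (0:ℝ) < c * (1 + ‖y‖) := by positivity
        have hxy0 : (0:ℝ) < ‖x - y‖ := lt_of_lt_of_le hcy hd
        have h1 : ind y = 1 := Set.indicator_of_mem (by simpa using hy) _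
        have hnorm : ‖H1 (x, y)‖ = |u y| ^ (p - 1) * |φ x| / ‖x - y‖ ^ γ := by
          simp only [hH1, hA, h1, one_mul]
          rw [Real.norm_eq_abs, abs_div, abs_mul, abs_neg, abs_mul,
            abs_of_nonneg (Real.rpow_nonneg (abs_nonneg (u y)) _),
            abs_of_nonneg (Real.rpow_nonneg (norm_nonneg _) γ)]
          rw [mul_assoc] at *
          congr 1
          rw [← mul_assoc, abs_rpow_mul_abs hp]
        rw [hnorm]
        have hrp : (c * (1 + ‖y‖)) ^ γ ≤ ‖x - y‖ ^ γ :=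
          Real.rpow_le_rpow hcy.le hd hγ0.le
        have hcγ : (0:ℝ) < c ^ γ := Real.rpow_pos_of_pos hc0 γ
        have hyγ : (0:ℝ) < (1 + ‖y‖) ^ γ := Real.rpow_pos_of_pos (by positivity) γ
        calc |u y| ^ (p - 1) * |φ x| / ‖x - y‖ ^ γ
            ≤ |u y| ^ (p - 1) * |φ x| / (c * (1 + ‖y‖)) ^ γ := by
              apply div_le_div_of_nonneg_left (by positivity) (by positivity) hrp
          _ = ((c ^ γ)⁻¹ * |φ x|) * (|u y| ^ (p - 1) * (1 + ‖y‖) ^ (-γ)) := by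
              rw [Real.mul_rpow hc0.le (by positivity), Real.rpow_neg (by positivity)]
              field_simp
  have hH1int : Integrable H1 (volume.prod volume) :=
    hgint.mono' hH1m.aestronglyMeasurable (ae_of_all _ hb)
  -- H2 is H1 composed with swap
  have hswap : H2 = H1 ∘ Prod.swap := by
    funext w
    simp only [hH1, hH2, Function.comp_apply, Prod.fst_swap, Prod.snd_swap]
    rw [norm_sub_rev]
  have hH2int : Integrable H2 (volume.prod volume) := by
    rw [hswap]; exact hH1int.swap
  have hH2eq : (∫ w, H2 w ∂(volume.prod volume)) = ∫ w, H1 w ∂(volume.prod volume) := by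
    rw [hswap]; exact integral_prod_swap H1
  -- a.e. identification
  set S : Set (EuclideanSpace ℝ (Fin N)) := Gᶜ ∪ u ⁻¹' {0} with hS
  have hSnull : volume Sᶜ = 0 := by
    have hset : Sᶜ = {y : EuclideanSpace ℝ (Fin N) | ¬ (y ∈ G → u y = 0)} := by
      ext y
      simp only [hS, Set.mem_compl_iff, Set.mem_union, Set.mem_preimage,
        Set.mem_singleton_iff, Set.mem_setOf_eq, not_or, Classical.not_imp]
      tauto
    rw [hset]
    exact ae_iff.mp hu0
  have hae : ∀ᵐ w : EuclideanSpace ℝ (Fin N) × EuclideanSpace ℝ (Fin N)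
      ∂(volume.prod volume), w.1 ∈ S ∧ w.2 ∈ S := by
    rw [ae_iff]
    have hsub : {w : EuclideanSpace ℝ (Fin N) × EuclideanSpace ℝ (Fin N) |
        ¬(w.1 ∈ S ∧ w.2 ∈ S)} ⊆ (Sᶜ ×ˢ Set.univ) ∪ (Set.univ ×ˢ Sᶜ) := by
      intro w hw
      rcases not_and_or.1 hw with h | h
      · exact Or.inl (Set.mem_prod.2 ⟨h, Set.mem_univ _⟩)
      · exact Or.inr (Set.mem_prod.2 ⟨Set.mem_univ _, h⟩)
    refine measure_mono_null hsub (measure_union_null ?_ ?_)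
    · rw [Measure.prod_prod, hSnull, zero_mul]
    · rw [Measure.prod_prod, hSnull, mul_zero]
  have haeeq : (fun w : EuclideanSpace ℝ (Fin N) × EuclideanSpace ℝ (Fin N) =>
      |u w.1 - u w.2| ^ (p - 2) * (u w.1 - u w.2) * (φ w.1 - φ w.2) / ‖w.1 - w.2‖ ^ γ)
      =ᵐ[volume.prod volume] fun w => H1 w + H2 w := by
    filter_upwards [hae] with w hw
    obtain ⟨hw1, hw2⟩ := hw
    obtain ⟨x, y⟩ := w
    by_cases hx : x ∈ G <;> by_cases hy : y ∈ G
    · have hux : u x = 0 := by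
        rcases hw1 with h | h
        exacts [absurd hx h, h]
      have huy : u y = 0 := by
        rcases hw2 with h | h
        exacts [absurd hy h, h]
      have h1 : ind y = 0 := Set.indicator_of_notMem (by simpa using hy) _
      have h2 : ind x = 0 := Set.indicator_of_notMem (by simpa using hx) _
      simp [hH1, hH2, h1, h2, hux, huy]
    · have hux : u x = 0 := by
        rcases hw1 with h | h
        exacts [absurd hx h, h]
      have hφy : φ y = 0 := image_eq_zero_of_notMem_tsupport (fun hmem => hy (hφG hmem))
      have h1 : ind y = 1 := Set.indicator_of_mem (by simpa using hy) _
      have h2 : ind x = 0 := Set.indicator_of_notMem (by simpa using hx) _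
      simp only [hH1, hH2, hA, h1, h2, one_mul, zero_mul, add_zero]
      rw [hux, hφy, zero_sub, abs_neg]
      ring
    · have huy : u y = 0 := by
        rcases hw2 with h | h
        exacts [absurd hy h, h]
      have hφx : φ x = 0 := image_eq_zero_of_notMem_tsupport (fun hmem => hx (hφG hmem))
      have h1 : ind y = 0 := Set.indicator_of_notMem (by simpa using hy) _
      have h2 : ind x = 1 := Set.indicator_of_mem (by simpa using hx) _
      simp only [hH1, hH2, hA, h1, h2, one_mul, zero_mul, zero_add]
      rw [huy, hφx, sub_zero, zero_sub]
      ring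
    · have hφx : φ x = 0 := image_eq_zero_of_notMem_tsupport (fun hmem => hx (hφG hmem))
      have hφy : φ y = 0 := image_eq_zero_of_notMem_tsupport (fun hmem => hy (hφG hmem))
      simp [hH1, hH2, hφx, hφy]
  -- the inner integral
  have hinner : ∀ x : EuclideanSpace ℝ (Fin N),
      (∫ y, H1 (x, y)) = φ x * -(∫ y in Gᶜ, A y / ‖x - y‖ ^ γ) := by
    intro x
    have h1 : (fun y => H1 (x, y))
        = Gᶜ.indicator (fun y => -(A y) * φ x / ‖x - y‖ ^ γ) := by
      funext y
      by_cases hy : y ∈ (Gᶜ : Set (EuclideanSpace ℝ (Fin N)))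
      · simp only [hH1, hind, Set.indicator_of_mem hy, one_mul]
      · simp only [hH1, hind, Set.indicator_of_notMem hy, zero_mul]
    rw [h1, integral_indicator hGc]
    have h2 : ∀ y : EuclideanSpace ℝ (Fin N),
        -(A y) * φ x / ‖x - y‖ ^ γ = φ x * -(A y / ‖x - y‖ ^ γ) := fun y => by ring
    simp_rw [h2]
    rw [integral_const_mul, integral_neg]
  have hH1val : (∫ w, H1 w ∂(volume.prod volume))
      = -∫ x in G, φ x * ∫ y in Gᶜ, A y / ‖x - y‖ ^ γ := by
    rw [integral_prod _ hH1int]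
    simp_rw [hinner]
    have h3 : ∀ x : EuclideanSpace ℝ (Fin N),
        φ x * -(∫ y in Gᶜ, A y / ‖x - y‖ ^ γ)
          = -(φ x * ∫ y in Gᶜ, A y / ‖x - y‖ ^ γ) := fun x => by ring
    simp_rw [h3]
    rw [integral_neg]
    congr 1
    refine (setIntegral_eq_integral_of_forall_compl_eq_zero fun x hx => ?_).symm
    rw [image_eq_zero_of_notMem_tsupport (fun hmem => hx (hφG hmem)), zero_mul]
  have hvol : (volume : Measure (EuclideanSpace ℝ (Fin N) × EuclideanSpace ℝ (Fin N)))
      = volume.prod volume := Measure.volume_eq_prod _ _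
  constructor
  · rw [hvol]
    exact ((hH1int.add hH2int).congr haeeq.symm)
  · rw [hvol]
    calc (∫ w : EuclideanSpace ℝ (Fin N) × EuclideanSpace ℝ (Fin N),
          |u w.1 - u w.2| ^ (p - 2) * (u w.1 - u w.2) * (φ w.1 - φ w.2) / ‖w.1 - w.2‖ ^ γ
          ∂(volume.prod volume))
        = ∫ w, (H1 w + H2 w) ∂(volume.prod volume) := integral_congr_ae haeeq
      _ = (∫ w, H1 w ∂(volume.prod volume)) + ∫ w, H2 w ∂(volume.prod volume) :=
          integral_add hH1int hH2int
      _ = 2 * ∫ w, H1 w ∂(volume.prod volume) := by rw [hH2eq]; ring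
      _ = -2 * ∫ x in G, φ x * ∫ y in Gᶜ, |u y| ^ (p - 2) * u y / ‖x - y‖ ^ γ := by
          rw [hH1val]
          simp only [hA]
          ring
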